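/- arXiv:2512.18112 — 3 statements merged into one kernel-verified Lean document; each statement's English description precedes it below -/
import Mathlib

section
/- Let E be a real inner product space, C ⊆ E a nonempty convex set, m > 0, and f₁, f₂ : E → ℝ two functions, each m-strongly convex on C and Fréchet differentiable with gradients ∇f₁, ∇f₂ at every point of C. If x₁ ∈ C minimizes f₁ over C and x₂ ∈ C minimizes f₂ over C, then m ‖x₁ − x₂‖ ≤ ‖∇f₁(x₂) − ∇f₂(x₂)‖. -/
/-!
Adding the first-order strong-convexity inequalities of `f₁` at `x₁` and at `x₂` gives
`m ‖x₁ - x₂‖² ≤ ⟪∇f₁ x₁ - ∇f₁ x₂, x₁ - x₂⟫`. The variational inequalities of the two constrained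
minimizers say `⟪∇f₁ x₁, x₁ - x₂⟫ ≤ 0 ≤ ⟪∇f₂ x₂, x₁ - x₂⟫`, so the right-hand side is at most
`⟪∇f₂ x₂ - ∇f₁ x₂, x₁ - x₂⟫`, and Cauchy–Schwarz concludes.
-/

open RealInnerProductSpace

section NormedSpace

variable {E : Type*} [NormedAddCommGroup E] [NormedSpace ℝ E] {s : Set E} {f : E → ℝ}
  {f' : E →L[ℝ] ℝ} {x y : E}

theorem ConvexOn.add_le_of_hasFDerivAt (hf : ConvexOn ℝ s f) (hx : x ∈ s) (hy : y ∈ s)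
    (hf' : HasFDerivAt f f' x) : f x + f' (y - x) ≤ f y := by
  have hline : ConvexOn ℝ (AffineMap.lineMap x y ⁻¹' s) (f ∘ AffineMap.lineMap (k := ℝ) x y) :=
    hf.comp_affineMap _
  have hderiv : HasDerivAt (f ∘ AffineMap.lineMap (k := ℝ) x y) (f' (y - x)) 0 :=
    (AffineMap.lineMap_apply_zero (k := ℝ) x y ▸ hf').comp_hasDerivAt 0
      AffineMap.hasDerivAt_lineMap
  have := hline.le_slope_of_hasDerivAt (by simpa) (by simpa) zero_lt_one hderiv
  simp only [slope_def_field, Function.comp_apply, AffineMap.lineMap_apply_zero,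
    AffineMap.lineMap_apply_one, sub_zero, div_one] at this
  linarith

theorem IsMinOn.hasFDerivAt_nonneg (hmin : IsMinOn f s x) (hs : Convex ℝ s) (hx : x ∈ s)
    (hy : y ∈ s) (hf' : HasFDerivAt f f' x) : 0 ≤ f' (y - x) :=
  hmin.localize.hasFDerivWithinAt_nonneg hf'.hasFDerivWithinAt
    (sub_mem_posTangentConeAt_of_segment_subset (hs.segment_subset hx hy))

end NormedSpace

section InnerProductSpace

variable {E : Type*} [NormedAddCommGroup E] [InnerProductSpace ℝ E] {s : Set E} {f : E → ℝ}
  {m : ℝ} {x y : E}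

theorem StrongConvexOn.add_le_of_hasFDerivAt (hf : StrongConvexOn s m f) (hx : x ∈ s)
    (hy : y ∈ s) {f' : E →L[ℝ] ℝ} (hf' : HasFDerivAt f f' x) :
    f x + f' (y - x) + m / 2 * ‖y - x‖ ^ 2 ≤ f y := by
  have hsq := (hasStrictFDerivAt_norm_sq x).hasFDerivAt.const_mul (m / 2)
  have := (strongConvexOn_iff_convex.1 hf).add_le_of_hasFDerivAt hx hy (hf'.sub hsq)
  have hnorm : ‖y‖ ^ 2 = ‖x‖ ^ 2 + 2 * ⟪x, y - x⟫ + ‖y - x‖ ^ 2 := by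
    simpa using norm_add_sq_real x (y - x)
  simp only [sub_apply, smul_apply, nsmul_eq_mul, Nat.cast_ofNat,
    innerSL_apply_apply, smul_eq_mul] at this
  linear_combination this - m / 2 * hnorm

theorem StrongConvexOn.mul_norm_sub_sq_le (hf : StrongConvexOn s m f) (hx : x ∈ s)
    (hy : y ∈ s) {fx' fy' : E →L[ℝ] ℝ} (hfx : HasFDerivAt f fx' x) (hfy : HasFDerivAt f fy' y) :
    m * ‖y - x‖ ^ 2 ≤ fy' (y - x) - fx' (y - x) := by
  have hxy := hf.add_le_of_hasFDerivAt hx hy hfx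
  have hyx := hf.add_le_of_hasFDerivAt hy hx hfy
  rw [norm_sub_rev, ← neg_sub y x, map_neg] at hyx
  linarith

end InnerProductSpace

theorem stmt_8_general {E : Type*} [NormedAddCommGroup E] [InnerProductSpace ℝ E]
    {C : Set E} (hCconv : Convex ℝ C) {m : ℝ}
    {f₁ f₂ : E → ℝ} {g₁ g₂ : E → E}
    (hf₁ : StrongConvexOn C m f₁)
    (hd₁ : ∀ x ∈ C, HasFDerivAt f₁ (innerSL ℝ (g₁ x)) x)
    (hd₂ : ∀ x ∈ C, HasFDerivAt f₂ (innerSL ℝ (g₂ x)) x)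
    {x₁ x₂ : E} (hx₁ : x₁ ∈ C) (hx₂ : x₂ ∈ C)
    (hmin₁ : ∀ y ∈ C, f₁ x₁ ≤ f₁ y) (hmin₂ : ∀ y ∈ C, f₂ x₂ ≤ f₂ y) :
    m * ‖x₁ - x₂‖ ≤ ‖g₁ x₂ - g₂ x₂‖ := by
  have hmono := hf₁.mul_norm_sub_sq_le hx₂ hx₁ (hd₁ x₂ hx₂) (hd₁ x₁ hx₁)
  have hvi₁ := (isMinOn_iff.2 hmin₁).hasFDerivAt_nonneg hCconv hx₁ hx₂ (hd₁ x₁ hx₁)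
  have hvi₂ := (isMinOn_iff.2 hmin₂).hasFDerivAt_nonneg hCconv hx₂ hx₁ (hd₂ x₂ hx₂)
  rw [← neg_sub x₁ x₂, map_neg] at hvi₁
  simp only [innerSL_apply_apply] at hmono hvi₁ hvi₂
  have hsq : m * ‖x₁ - x₂‖ ^ 2 ≤ ‖g₁ x₂ - g₂ x₂‖ * ‖x₁ - x₂‖ :=
    calc m * ‖x₁ - x₂‖ ^ 2 ≤ ⟪g₂ x₂ - g₁ x₂, x₁ - x₂⟫ := by rw [inner_sub_left]; linarith
      _ ≤ ‖g₂ x₂ - g₁ x₂‖ * ‖x₁ - x₂‖ := real_inner_le_norm _ _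
      _ = ‖g₁ x₂ - g₂ x₂‖ * ‖x₁ - x₂‖ := by rw [norm_sub_rev]
  rcases (norm_nonneg (x₁ - x₂)).eq_or_lt with h0 | hpos
  · simp [← h0]
  · exact le_of_mul_le_mul_right (by rwa [sq, ← mul_assoc] at hsq) hpos

/-- Stability of constrained minimizers of strongly convex functions: if `f₁, f₂` are
`m`-strongly convex on a nonempty convex set `C` in a real inner product space, Fréchet
differentiable on `C` with gradients `g₁, g₂` (i.e. derivative `⟪gᵢ x, ·⟫`), and `x₁, x₂`
minimize `f₁, f₂` over `C` respectively, then `m * ‖x₁ - x₂‖ ≤ ‖g₁ x₂ - g₂ x₂‖`. -/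
theorem stmt_8 {E : Type*} [NormedAddCommGroup E] [InnerProductSpace ℝ E]
    {C : Set E} (hCne : C.Nonempty) (hCconv : Convex ℝ C) {m : ℝ} (hm : 0 < m)
    {f₁ f₂ : E → ℝ} {g₁ g₂ : E → E}
    (hf₁ : StrongConvexOn C m f₁) (hf₂ : StrongConvexOn C m f₂)
    (hd₁ : ∀ x ∈ C, HasFDerivAt f₁ (innerSL ℝ (g₁ x)) x)
    (hd₂ : ∀ x ∈ C, HasFDerivAt f₂ (innerSL ℝ (g₂ x)) x)
    {x₁ x₂ : E} (hx₁ : x₁ ∈ C) (hx₂ : x₂ ∈ C)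
    (hmin₁ : ∀ y ∈ C, f₁ x₁ ≤ f₁ y) (hmin₂ : ∀ y ∈ C, f₂ x₂ ≤ f₂ y) :
    m * ‖x₁ - x₂‖ ≤ ‖g₁ x₂ - g₂ x₂‖ :=
  stmt_8_general hCconv hf₁ hd₁ hd₂ hx₁ hx₂ hmin₁ hmin₂
end

section
/- Let Q be a metric space, E a real inner product space, C ⊆ E a nonempty convex set, and m > 0, L ≥ 0. Let f : Q × E → ℝ be such that for each q ∈ Q the map x ↦ f(q, x) is m-strongly convex on C and Fréchet differentiable at every point of C with gradient ∇ₓf(q, ·), and suppose the gradient is Lipschitz in the parameter uniformly on C: ‖∇ₓf(q₁, x) − ∇ₓf(q₂, x)‖ ≤ L · d(q₁, q₂) for all x ∈ C and q₁, q₂ ∈ Q. If b : Q → C is a function such that for each q, b(q) minimizes f(q, ·) over C, then b is Lipschitz continuous with constant L/m: ‖b(q₁) − b(q₂)‖ ≤ (L/m) d(q₁, q₂) for all q₁, q₂ ∈ Q. -/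
/-!
Strong convexity makes the gradient strongly monotone,
`m ‖x - y‖² ≤ ⟪∇f x - ∇f y, x - y⟫`, while the first-order optimality conditions at the two
minimizers `x₁ = b q₁`, `x₂ = b q₂` give `⟪∇f q₁ x₁, x₂ - x₁⟫ ≥ 0` and `⟪∇f q₂ x₂, x₁ - x₂⟫ ≥ 0`.
Combining the three, `m ‖x₁ - x₂‖² ≤ ⟪∇f q₂ x₂ - ∇f q₁ x₂, x₁ - x₂⟫`, so by Cauchy–Schwarz
`m ‖x₁ - x₂‖ ≤ ‖∇f q₁ x₂ - ∇f q₂ x₂‖ ≤ L d(q₁, q₂)`.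
-/

theorem ConvexOn.hasFDerivAt_apply_sub_le {E : Type*} [NormedAddCommGroup E] [NormedSpace ℝ E]
    {s : Set E} {g : E → ℝ} {g' : E →L[ℝ] ℝ} {x y : E} (hg : ConvexOn ℝ s g)
    (hx : x ∈ s) (hy : y ∈ s) (hd : HasFDerivAt g g' x) : g' (y - x) ≤ g y - g x := by
  let ℓ : ℝ →ᵃ[ℝ] E := AffineMap.lineMap x y
  have hℓ : HasDerivAt (g ∘ ℓ) (g' (y - x)) 0 := by
    refine HasFDerivAt.comp_hasDerivAt (0 : ℝ) ?_ AffineMap.hasDerivAt_lineMap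
    simpa [ℓ] using hd
  have h := (hg.comp_affineMap ℓ).le_slope_of_hasDerivAt (x := 0) (y := 1)
    (by simpa [ℓ] using hx) (by simpa [ℓ] using hy) one_pos hℓ
  simpa [slope_def_field, ℓ] using h

theorem IsMinOn.hasFDerivWithinAt_apply_sub_nonneg {E : Type*} [NormedAddCommGroup E]
    [NormedSpace ℝ E] {s : Set E} {f : E → ℝ} {f' : E →L[ℝ] ℝ} {x y : E} (hmin : IsMinOn f s x)
    (hs : Convex ℝ s) (hx : x ∈ s) (hy : y ∈ s) (hd : HasFDerivWithinAt f f' s x) :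
    0 ≤ f' (y - x) :=
  hmin.localize.hasFDerivWithinAt_nonneg hd
    (sub_mem_posTangentConeAt_of_segment_subset (hs.segment_subset hx hy))

section InnerProductSpace

variable {E : Type*} [NormedAddCommGroup E] [InnerProductSpace ℝ E] {s : Set E} {m : ℝ}

theorem HasFDerivAt.sub_half_mul_norm_sq {f : E → ℝ} {x u : E}
    (hf : HasFDerivAt f (innerSL ℝ u) x) :
    HasFDerivAt (fun z => f z - m / 2 * ‖z‖ ^ 2) (innerSL ℝ (u - m • x)) x := by
  refine (hf.sub ((hasStrictFDerivAt_norm_sq x).hasFDerivAt.const_mul (m / 2))).congr_fderiv ?_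
  ext e
  simp only [sub_apply, smul_apply, innerSL_apply_apply,
    inner_sub_left, real_inner_smul_left, smul_eq_mul]
  ring

theorem StrongConvexOn.mul_norm_sub_sq_le_inner {f : E → ℝ} {x y u v : E}
    (hf : StrongConvexOn s m f) (hx : x ∈ s) (hy : y ∈ s)
    (hu : HasFDerivAt f (innerSL ℝ u) x) (hv : HasFDerivAt f (innerSL ℝ v) y) :
    m * ‖x - y‖ ^ 2 ≤ inner ℝ (u - v) (x - y) := by
  have hg := strongConvexOn_iff_convex.1 hf
  have hxy := hg.hasFDerivAt_apply_sub_le hx hy hu.sub_half_mul_norm_sq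
  have hyx := hg.hasFDerivAt_apply_sub_le hy hx hv.sub_half_mul_norm_sq
  rw [innerSL_apply_apply, ← neg_sub x y, inner_neg_right] at hxy
  rw [innerSL_apply_apply] at hyx
  have hexpand : inner ℝ ((v - m • y) - (u - m • x)) (x - y)
      = m * ‖x - y‖ ^ 2 - inner ℝ (u - v) (x - y) := by
    rw [show (v - m • y) - (u - m • x) = m • (x - y) - (u - v) by module, inner_sub_left,
      real_inner_smul_left, real_inner_self_eq_norm_sq]
  rw [inner_sub_left] at hexpand
  linarith

theorem StrongConvexOn.mul_norm_sub_le_of_isMinOn {f₁ f₂ : E → ℝ} {x₁ x₂ u₁ v₁ u₂ : E}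
    (hs : Convex ℝ s) (hf₁ : StrongConvexOn s m f₁) (hx₁ : x₁ ∈ s) (hx₂ : x₂ ∈ s)
    (hmin₁ : IsMinOn f₁ s x₁) (hmin₂ : IsMinOn f₂ s x₂)
    (hu₁ : HasFDerivAt f₁ (innerSL ℝ u₁) x₁) (hv₁ : HasFDerivAt f₁ (innerSL ℝ v₁) x₂)
    (hu₂ : HasFDerivAt f₂ (innerSL ℝ u₂) x₂) :
    m * ‖x₁ - x₂‖ ≤ ‖v₁ - u₂‖ := by
  have hmono := hf₁.mul_norm_sub_sq_le_inner hx₁ hx₂ hu₁ hv₁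
  have hopt₁ := hmin₁.hasFDerivWithinAt_apply_sub_nonneg hs hx₁ hx₂ hu₁.hasFDerivWithinAt
  have hopt₂ := hmin₂.hasFDerivWithinAt_apply_sub_nonneg hs hx₂ hx₁ hu₂.hasFDerivWithinAt
  rw [innerSL_apply_apply, ← neg_sub x₁ x₂, inner_neg_right] at hopt₁
  rw [innerSL_apply_apply] at hopt₂
  have hsq : m * ‖x₁ - x₂‖ ^ 2 ≤ ‖v₁ - u₂‖ * ‖x₁ - x₂‖ :=
    calc m * ‖x₁ - x₂‖ ^ 2 ≤ inner ℝ (u₁ - v₁) (x₁ - x₂) := hmono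
      _ ≤ inner ℝ (u₂ - v₁) (x₁ - x₂) := by rw [inner_sub_left, inner_sub_left]; linarith
      _ ≤ ‖v₁ - u₂‖ * ‖x₁ - x₂‖ := by
        rw [← norm_neg, neg_sub]; exact real_inner_le_norm _ _
  rcases (norm_nonneg (x₁ - x₂)).eq_or_lt with h0 | hpos
  · rw [← h0, mul_zero]; exact norm_nonneg _
  · exact le_of_mul_le_mul_right (by linarith) hpos

end InnerProductSpace

theorem stmt_9_general {Q E : Type*} [MetricSpace Q]
    [NormedAddCommGroup E] [InnerProductSpace ℝ E]
    {C : Set E} (hCconv : Convex ℝ C)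
    {m L : ℝ} (hm : 0 < m)
    {f : Q → E → ℝ} {G : Q → E → E}
    (hsc : ∀ q : Q, StrongConvexOn C m (f q))
    (hd : ∀ q : Q, ∀ x ∈ C, HasFDerivAt (f q) (innerSL ℝ (G q x)) x)
    (hLip : ∀ q₁ q₂ : Q, ∀ x ∈ C, ‖G q₁ x - G q₂ x‖ ≤ L * dist q₁ q₂)
    {b : Q → E} (hbC : ∀ q, b q ∈ C)
    (hbmin : ∀ q : Q, ∀ y ∈ C, f q (b q) ≤ f q y) :
    ∀ q₁ q₂ : Q, ‖b q₁ - b q₂‖ ≤ (L / m) * dist q₁ q₂ := by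
  intro q₁ q₂
  have hstab := (hsc q₁).mul_norm_sub_le_of_isMinOn hCconv (hbC q₁) (hbC q₂)
    (hbmin q₁) (hbmin q₂)
    (hd q₁ _ (hbC q₁)) (hd q₁ _ (hbC q₂)) (hd q₂ _ (hbC q₂))
  rw [div_mul_eq_mul_div, le_div_iff₀ hm, mul_comm]
  exact hstab.trans (hLip q₁ q₂ _ (hbC q₂))

/-- Lipschitz best response: if `f (q, ·)` is `m`-strongly convex on a nonempty convex set
`C` and Fréchet differentiable on `C` with gradient `G q ·`, the gradient is `L`-Lipschitz in
the parameter `q` uniformly on `C`, and `b q ∈ C` minimizes `f (q, ·)` over `C` for each `q`,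
then `b` is `(L / m)`-Lipschitz. -/
theorem stmt_9 {Q E : Type*} [MetricSpace Q]
    [NormedAddCommGroup E] [InnerProductSpace ℝ E]
    {C : Set E} (hCne : C.Nonempty) (hCconv : Convex ℝ C)
    {m L : ℝ} (hm : 0 < m) (hL : 0 ≤ L)
    {f : Q → E → ℝ} {G : Q → E → E}
    (hsc : ∀ q : Q, StrongConvexOn C m (f q))
    (hd : ∀ q : Q, ∀ x ∈ C, HasFDerivAt (f q) (innerSL ℝ (G q x)) x)
    (hLip : ∀ q₁ q₂ : Q, ∀ x ∈ C, ‖G q₁ x - G q₂ x‖ ≤ L * dist q₁ q₂)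
    {b : Q → E} (hbC : ∀ q, b q ∈ C)
    (hbmin : ∀ q : Q, ∀ y ∈ C, f q (b q) ≤ f q y) :
    ∀ q₁ q₂ : Q, ‖b q₁ - b q₂‖ ≤ (L / m) * dist q₁ q₂ :=
  stmt_9_general hCconv hm hsc hd hLip hbC hbmin
end

section
/- Let E be a real normed vector space, L ∈ [0, 1), and T : E → E a Lipschitz map with constant L having a fixed point q* (T(q*) = q*). Let (β_t)_{t≥0} be a sequence in (0, 1] with ∑_{t=0}^∞ β_t = ∞, and let (e_t)_{t≥0} be a sequence in E with ‖e_t‖ → 0. Define a sequence (q_t)_{t≥0} in E by an arbitrary q_0 and q_{t+1} = (1 − β_t) q_t + β_t (T(q_t) + e_t). Then q_t → q*. -/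
/-!
Put `a t = ‖q t - q*‖`. Convexity and the contraction property give
`a (t+1) ≤ (1 - γ t) a t + γ t b t` with `γ t = (1 - L) β t` and `b t = ‖e t‖ / (1 - L) → 0`.
Once `b t ≤ ε`, the excess `max (a t - ε) 0` shrinks by the factor `1 - γ t ≤ exp (-γ t)` at
every step, so it is bounded by `exp (-∑ γ)` times a constant and tends to `0` since `∑ γ = ∞`.
As `ε` is arbitrary, `a t → 0`.
-/

open Filter Topology Finset

theorem le_exp_neg_sum_Ico_mul_of_le {u γ : ℕ → ℝ} {N : ℕ}
    (h : ∀ t ≥ N, u (t + 1) ≤ Real.exp (-γ t) * u t) :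
    ∀ t ≥ N, u t ≤ Real.exp (-∑ k ∈ Ico N t, γ k) * u N := by
  intro t ht
  induction t, ht using Nat.le_induction with
  | base => simp
  | succ t ht ih =>
    calc u (t + 1) ≤ Real.exp (-γ t) * u t := h t ht
      _ ≤ Real.exp (-γ t) * (Real.exp (-∑ k ∈ Ico N t, γ k) * u N) := by gcongr
      _ = Real.exp (-∑ k ∈ Ico N (t + 1), γ k) * u N := by
        rw [sum_Ico_succ_top ht, ← mul_assoc, ← Real.exp_add]
        ring_nf

theorem tendsto_zero_of_eventually_le_exp_neg_mul {u γ : ℕ → ℝ} (hu : ∀ t, 0 ≤ u t)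
    (hγ : Tendsto (fun n => ∑ k ∈ range n, γ k) atTop atTop)
    (h : ∀ᶠ t in atTop, u (t + 1) ≤ Real.exp (-γ t) * u t) :
    Tendsto u atTop (𝓝 0) := by
  obtain ⟨N, hN⟩ := eventually_atTop.1 h
  have hsum : Tendsto (fun t => ∑ k ∈ Ico N t, γ k) atTop atTop := by
    refine (tendsto_atTop_add_const_right _ (-∑ k ∈ range N, γ k) hγ).congr' ?_
    filter_upwards [eventually_ge_atTop N] with t ht
    rw [sum_Ico_eq_sub _ ht, sub_eq_add_neg]
  have hbound : Tendsto (fun t => Real.exp (-∑ k ∈ Ico N t, γ k) * u N) atTop (𝓝 0) := by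
    simpa using (Real.tendsto_exp_atBot.comp (tendsto_neg_atTop_atBot.comp hsum)).mul_const (u N)
  refine tendsto_of_tendsto_of_tendsto_of_le_of_le' tendsto_const_nhds hbound
    (Eventually.of_forall hu) ?_
  filter_upwards [eventually_ge_atTop N] with t ht
  exact le_exp_neg_sum_Ico_mul_of_le hN t ht

theorem tendsto_zero_of_le_one_sub_mul_add_mul {a γ b : ℕ → ℝ} (ha : ∀ t, 0 ≤ a t)
    (hγ0 : ∀ t, 0 ≤ γ t) (hγ1 : ∀ t, γ t ≤ 1)
    (hγ : Tendsto (fun n => ∑ k ∈ range n, γ k) atTop atTop)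
    (hb : Tendsto b atTop (𝓝 0))
    (hrec : ∀ t, a (t + 1) ≤ (1 - γ t) * a t + γ t * b t) :
    Tendsto a atTop (𝓝 0) := by
  refine tendsto_order.2 ⟨fun ε hε => Eventually.of_forall fun t => hε.trans_le (ha t),
    fun ε hε => ?_⟩
  set δ := ε / 2 with hδε
  have hδ : 0 < δ := half_pos hε
  have hexcess : ∀ᶠ t in atTop, max (a (t + 1) - δ) 0 ≤ Real.exp (-γ t) * max (a t - δ) 0 := by
    filter_upwards [hb.eventually (gt_mem_nhds hδ)] with t hbt
    have hcontract : 1 - γ t ≤ Real.exp (-γ t) := by linarith [Real.add_one_le_exp (-γ t)]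
    have hstep : a (t + 1) - δ ≤ (1 - γ t) * max (a t - δ) 0 := by
      nlinarith [hγ0 t, hγ1 t, le_max_left (a t - δ) 0, hrec t]
    refine max_le (hstep.trans ?_) (by positivity)
    exact mul_le_mul_of_nonneg_right hcontract (le_max_right _ _)
  have hlim := tendsto_zero_of_eventually_le_exp_neg_mul (u := fun t => max (a t - δ) 0)
    (fun t => le_max_right _ _) hγ hexcess
  filter_upwards [hlim.eventually (gt_mem_nhds hδ)] with t ht
  linarith [le_max_left (a t - δ) 0, hδε]

theorem norm_convex_step_sub_le {E : Type*} [NormedAddCommGroup E] [NormedSpace ℝ E]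
    {β : ℝ} (hβ0 : 0 ≤ β) (hβ1 : β ≤ 1) (x y z e : E) :
    ‖(1 - β) • x + β • (z + e) - y‖ ≤ (1 - β) * ‖x - y‖ + β * ‖z - y‖ + β * ‖e‖ := by
  have hsplit : (1 - β) • x + β • (z + e) - y = (1 - β) • (x - y) + β • (z - y) + β • e := by
    module
  rw [hsplit]
  refine (norm_add₃_le ..).trans_eq ?_
  rw [norm_smul, norm_smul, norm_smul, Real.norm_of_nonneg (sub_nonneg.2 hβ1),
    Real.norm_of_nonneg hβ0]

/-- Deterministic core of the two-time scale convergence theorem: averaged iteration toward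
an `L`-contraction `T` (with `L < 1` and fixed point `q*`), with vanishing perturbations
`e_t` and step sizes `β_t ∈ (0, 1]` with `∑ β_t = ∞`, converges to `q*`. -/
theorem stmt_13 {E : Type*} [NormedAddCommGroup E] [NormedSpace ℝ E]
    {L : ℝ} (hL0 : 0 ≤ L) (hL1 : L < 1) {T : E → E}
    (hT : ∀ x y : E, ‖T x - T y‖ ≤ L * ‖x - y‖)
    {qs : E} (hfix : T qs = qs)
    {β : ℕ → ℝ} (hβ0 : ∀ t, 0 < β t) (hβ1 : ∀ t, β t ≤ 1)
    (hβdiv : Tendsto (fun n => ∑ t ∈ Finset.range n, β t) atTop atTop)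
    {e : ℕ → E} (he : Tendsto (fun t => ‖e t‖) atTop (nhds 0))
    (q : ℕ → E)
    (hrec : ∀ t, q (t + 1) = (1 - β t) • q t + β t • (T (q t) + e t)) :
    Tendsto q atTop (nhds qs) := by
  have hc : 0 < 1 - L := sub_pos.2 hL1
  have hstep : ∀ t, ‖q (t + 1) - qs‖ ≤
      (1 - β t * (1 - L)) * ‖q t - qs‖ + β t * (1 - L) * (‖e t‖ / (1 - L)) := by
    intro t
    have hTq : β t * ‖T (q t) - qs‖ ≤ β t * (L * ‖q t - qs‖) := by
      simpa only [hfix] using mul_le_mul_of_nonneg_left (hT (q t) qs) (hβ0 t).le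
    have hcancel : β t * (1 - L) * (‖e t‖ / (1 - L)) = β t * ‖e t‖ := by field_simp
    rw [hrec t, hcancel]
    linarith [norm_convex_step_sub_le (hβ0 t).le (hβ1 t) (q t) qs (T (q t)) (e t)]
  have hγ : Tendsto (fun n => ∑ k ∈ range n, β k * (1 - L)) atTop atTop := by
    simpa only [← sum_mul] using hβdiv.atTop_mul_const hc
  rw [tendsto_iff_norm_sub_tendsto_zero]
  refine tendsto_zero_of_le_one_sub_mul_add_mul (fun t => norm_nonneg _)
    (fun t => (mul_pos (hβ0 t) hc).le) (fun t => ?_) hγ ?_ hstep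
  · exact mul_le_one₀ (hβ1 t) hc.le (by linarith)
  · simpa using he.div_const (1 - L)
end
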